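/- arXiv:1907.01598 — 4 statements merged into one kernel-verified Lean document; each statement's English description precedes it below -/
import Mathlib

section
/- For every g > 0 and every continuous u : ℝ → ℝ, there exist an initial angle φ ∈ (0, π) and a solution α of the pendulum equation with α(0) = φ and α'(0) = 0 such that α(t) ∈ (0, π) for all t ≥ 0. (Infinite-horizon version of Whitney's problem: the rod never touches the floor for all future time.) -/
/-!
Shooting argument. Released at rest from `φ = 0` the rod immediately falls below the floor
(`α'' = -g` there), and from `φ = π` it immediately rises past `π`. The initial angles whose
trajectory drops below `0` before reaching `π` form an open set `L` (solutions depend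
continuously on initial data, by Grönwall), and so do those rising above `π` before dropping to
`0`, a set `R`. They are disjoint, `0 ∈ L` and `π ∈ R`, so by connectedness of `[0, π]` some `φ`
lies in neither. Its trajectory never leaves `(0, π)`: at a first contact with `0` (or `π`) the
acceleration `-g` (or `g`) pushes it strictly through, which would put `φ` in `L` (or `R`).

Solutions exist for all times although `u` may be unbounded: on each `[-T, T]` Picard–Lindelöf
applies to the velocity-rescaled system, and these local solutions glue by uniqueness.
-/

/-- `α` is a solution of the inverted-pendulum equation
`α'' t = -g * cos (α t) + u t * sin (α t)`. -/
def IsPendulumSolution (g : ℝ) (u : ℝ → ℝ) (α : ℝ → ℝ) : Prop :=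
  ContDiff ℝ 2 α ∧
    ∀ t : ℝ, deriv (deriv α) t = -g * Real.cos (α t) + u t * Real.sin (α t)

open Set Real Filter Topology Metric
open scoped NNReal

section SecondOrder

variable {E : Type*} [NormedAddCommGroup E]

def secondOrderVectorField (F : ℝ → E → E) (t : ℝ) (p : E × E) : E × E := (p.2, F t p.1)

theorem LipschitzWith.secondOrderVectorField {F : ℝ → E → E} {t : ℝ} {K : ℝ≥0}
    (h : LipschitzWith K (F t)) : LipschitzWith (max 1 K) (secondOrderVectorField F t) :=
  (LipschitzWith.prod_snd.prodMk (h.comp LipschitzWith.prod_fst)).weaken (by simp)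

variable [NormedSpace ℝ E]

theorem exists_forall_hasDerivAt_of_forall_exists_Ioo {v : ℝ → E → E} {x₀ : E}
    (hv : ∀ T, ∃ K, ∀ t ∈ Ioo (-T) T, LipschitzWith K (v t))
    (hsol : ∀ T, ∃ γ : ℝ → E, γ 0 = x₀ ∧ ∀ t ∈ Ioo (-T) T, HasDerivAt γ (v t (γ t)) t) :
    ∃ γ : ℝ → E, γ 0 = x₀ ∧ ∀ t, HasDerivAt γ (v t (γ t)) t := by
  choose γ hγ0 hγ using hsol
  have hagree : ∀ T T', 0 < T → 0 < T' → EqOn (γ T) (γ T') (Ioo (-min T T') (min T T')) := by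
    intro T T' hT hT'
    obtain ⟨K, hK⟩ := hv (min T T')
    have hsub : ∀ T'' ≥ min T T', Ioo (-min T T') (min T T') ⊆ Ioo (-T'') T'' :=
      fun T'' h => Ioo_subset_Ioo (neg_le_neg h) h
    exact ODE_solution_unique_of_mem_Ioo (s := fun _ => univ)
      (fun t ht => (hK t ht).lipschitzOnWith) (t₀ := 0) ⟨by simp [hT, hT'], by simp [hT, hT']⟩
      (fun t ht => ⟨hγ T t (hsub T (min_le_left _ _) ht), mem_univ _⟩)
      (fun t ht => ⟨hγ T' t (hsub T' (min_le_right _ _) ht), mem_univ _⟩)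
      (by rw [hγ0, hγ0])
  refine ⟨fun t => γ (|t| + 1) t, hγ0 _, fun t => ?_⟩
  have hnear : ∀ᶠ s in 𝓝 t, γ (|s| + 1) s = γ (|t| + 1) s := by
    filter_upwards [(continuous_abs.tendsto t).eventually (gt_mem_nhds (lt_add_one |t|))]
      with s hs
    refine hagree _ _ (by positivity) (by positivity) ?_
    rw [mem_Ioo, ← abs_lt]
    exact lt_min (lt_add_one _) hs
  have ht : t ∈ Ioo (-(|t| + 1)) (|t| + 1) := by rw [mem_Ioo, ← abs_lt]; exact lt_add_one _
  exact (hγ _ t ht).congr_of_eventuallyEq hnear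

theorem dist_le_of_trajectories_secondOrder {F : ℝ → E → E} {K : ℝ≥0} {b : ℝ}
    (hlip : ∀ t ∈ Ico 0 b, LipschitzWith K (F t)) {x x' y y' : ℝ → E}
    (hx : ∀ t, HasDerivAt x (x' t) t ∧ HasDerivAt x' (F t (x t)) t)
    (hy : ∀ t, HasDerivAt y (y' t) t ∧ HasDerivAt y' (F t (y t)) t) {t : ℝ} (ht : t ∈ Icc 0 b) :
    dist (x t) (y t) ≤ dist (x 0, x' 0) (y 0, y' 0) * exp (max 1 K * b) := by
  have hsol : ∀ {z z' : ℝ → E}, (∀ t, HasDerivAt z (z' t) t ∧ HasDerivAt z' (F t (z t)) t) →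
      ∀ t, HasDerivAt (fun t => (z t, z' t)) (secondOrderVectorField F t (z t, z' t)) t :=
    fun hz t => (hz t).1.prodMk (hz t).2
  have hgron := dist_le_of_trajectories_ODE_of_mem (s := fun _ => univ) (a := 0) (b := b)
    (fun t ht => (hlip t ht).secondOrderVectorField.lipschitzOnWith)
    (HasDerivAt.continuousOn fun t _ => hsol hx t) (fun t _ => (hsol hx t).hasDerivWithinAt)
    (fun _ _ => mem_univ _)
    (HasDerivAt.continuousOn fun t _ => hsol hy t) (fun t _ => (hsol hy t).hasDerivWithinAt)
    (fun _ _ => mem_univ _) le_rfl t ht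
  calc dist (x t) (y t) ≤ dist (x t, x' t) (y t, y' t) := le_max_left _ _
    _ ≤ _ := hgron
    _ ≤ _ := by gcongr; linarith [ht.2]

variable [CompleteSpace E]

theorem exists_forall_mem_Icc_hasDerivWithinAt_of_norm_le {v : ℝ → E → E} {T : ℝ} {L K : ℝ≥0}
    {x₀ : E} (hT : 0 ≤ T)
    (hlip : ∀ t ∈ Icc (-T) T, LipschitzOnWith K (v t) (closedBall x₀ (L * T)))
    (hcont : ∀ x, ContinuousOn (v · x) (Icc (-T) T))
    (hbound : ∀ t ∈ Icc (-T) T, ∀ x ∈ closedBall x₀ (L * T), ‖v t x‖ ≤ L) :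
    ∃ γ : ℝ → E, γ 0 = x₀ ∧ ∀ t ∈ Icc (-T) T, HasDerivWithinAt γ (v t (γ t)) (Icc (-T) T) t := by
  have hLT : ((L * T).toNNReal : ℝ) = L * T := Real.coe_toNNReal _ (by positivity)
  have hPL : IsPicardLindelof v (tmin := -T) (tmax := T) ⟨0, by linarith, hT⟩ x₀
      (L * T).toNNReal 0 L K :=
    { lipschitzOnWith := fun t ht => by rw [hLT]; exact hlip t ht
      continuousOn := fun x _ => hcont x
      norm_le := fun t ht x hx => by rw [hLT] at hx; exact hbound t ht x hx
      mul_max_le := by simp [hLT] }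
  exact hPL.exists_eq_forall_mem_Icc_hasDerivWithinAt₀

/-- Picard–Lindelöf applies on all of `[-T, T]` to the system in the variables `(x, 2T • x')`:
its field is bounded by `L` on the ball of radius `L * T` around the initial point. -/
theorem exists_eq_forall_mem_Icc_hasDerivWithinAt_secondOrderVectorField {F : ℝ → E → E}
    {T C : ℝ} {K : ℝ≥0} (hT : 0 < T) (hlip : ∀ t ∈ Icc (-T) T, LipschitzWith K (F t))
    (hbound : ∀ t ∈ Icc (-T) T, ∀ x, ‖F t x‖ ≤ C)
    (hcont : ∀ x, ContinuousOn (F · x) (Icc (-T) T)) (x₀ v₀ : E) :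
    ∃ γ : ℝ → E × E, γ 0 = (x₀, v₀) ∧ ∀ t ∈ Icc (-T) T,
      HasDerivWithinAt γ (secondOrderVectorField F t (γ t)) (Icc (-T) T) t := by
  have hC : 0 ≤ C := (norm_nonneg _).trans (hbound 0 ⟨by linarith, hT.le⟩ x₀)
  set k := 2 * T with hk
  have hk0 : 0 < k := by positivity
  set L : ℝ≥0 := ⟨2 * ‖v₀‖ + 2 * k * C, by positivity⟩
  have hL : (L : ℝ) = 2 * ‖v₀‖ + 2 * k * C := rfl
  have hW : ∀ t ∈ Icc (-T) T, ∀ p ∈ closedBall (x₀, k • v₀) (L * T),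
      ‖(k⁻¹ • p.2, k • F t p.1)‖ ≤ L := fun t ht p hp => by
    have hp2 : ‖p.2 - k • v₀‖ ≤ L * T := (norm_snd_le _).trans (mem_closedBall_iff_norm.1 hp)
    have hv₀ : ‖p.2‖ ≤ k * ‖v₀‖ + L * T := by
      have := norm_le_norm_add_norm_sub' p.2 (k • v₀)
      rw [norm_smul, Real.norm_of_nonneg hk0.le] at this
      linarith
    rw [Prod.norm_def, norm_smul, norm_smul, Real.norm_of_nonneg hk0.le,
      Real.norm_of_nonneg (inv_nonneg.2 hk0.le)]
    refine max_le ?_ ?_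
    · calc k⁻¹ * ‖p.2‖ ≤ k⁻¹ * (k * ‖v₀‖ + L * T) := by gcongr
        _ = ‖v₀‖ + L / 2 := by rw [hk]; field_simp
        _ ≤ L := by rw [hL]; nlinarith [norm_nonneg v₀]
    · calc k * ‖F t p.1‖ ≤ k * C := by gcongr; exact hbound t ht _
        _ ≤ L := by rw [hL]; nlinarith [norm_nonneg v₀]
  obtain ⟨y, hy0, hy⟩ := exists_forall_mem_Icc_hasDerivWithinAt_of_norm_le hT.le
    (fun t ht => (((lipschitzWith_smul k⁻¹).comp LipschitzWith.prod_snd).prodMk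
      ((lipschitzWith_smul k).comp ((hlip t ht).comp LipschitzWith.prod_fst))).lipschitzOnWith)
    (fun p => continuousOn_const.prodMk ((hcont p.1).const_smul k)) hW
  let Λ : E × E →L[ℝ] E × E :=
    (ContinuousLinearMap.id ℝ E).prodMap (k⁻¹ • ContinuousLinearMap.id ℝ E)
  refine ⟨Λ ∘ y, ?_, fun t ht => ?_⟩
  · change Λ (y 0) = _
    simp [Λ, hy0, hk0.ne']
  · refine (Λ.hasFDerivAt.comp_hasDerivWithinAt t (hy t ht)).congr_deriv ?_
    simp [Λ, secondOrderVectorField, smul_smul, hk0.ne']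

theorem exists_forall_hasDerivAt_secondOrder {F : ℝ → E → E}
    (hF : ∀ T, ∃ K : ℝ≥0, ∃ C, ∀ t ∈ Icc (-T) T, LipschitzWith K (F t) ∧ ∀ x, ‖F t x‖ ≤ C)
    (hcont : ∀ x, Continuous (F · x)) (x₀ v₀ : E) :
    ∃ x x' : ℝ → E, x 0 = x₀ ∧ x' 0 = v₀ ∧
      ∀ t, HasDerivAt x (x' t) t ∧ HasDerivAt x' (F t (x t)) t := by
  obtain ⟨γ, hγ0, hγ⟩ : ∃ γ : ℝ → E × E, γ 0 = (x₀, v₀) ∧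
      ∀ t, HasDerivAt γ (secondOrderVectorField F t (γ t)) t := by
    refine exists_forall_hasDerivAt_of_forall_exists_Ioo (fun T => ?_) (fun T => ?_)
    · obtain ⟨K, C, hKC⟩ := hF T
      exact ⟨max 1 K, fun t ht => (hKC t (Ioo_subset_Icc_self ht)).1.secondOrderVectorField⟩
    · obtain ⟨K, C, hKC⟩ := hF (|T| + 1)
      obtain ⟨γ, hγ0, hγ⟩ := exists_eq_forall_mem_Icc_hasDerivWithinAt_secondOrderVectorField
        (by positivity) (fun t ht => (hKC t ht).1) (fun t ht => (hKC t ht).2)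
        (fun x => (hcont x).continuousOn) x₀ v₀
      have hsub : Ioo (-T) T ⊆ Ioo (-(|T| + 1)) (|T| + 1) := by
        apply Ioo_subset_Ioo <;> linarith [neg_abs_le T, le_abs_self T]
      refine ⟨γ, hγ0, fun t ht => (hγ t (Ioo_subset_Icc_self (hsub ht))).hasDerivAt ?_⟩
      exact Icc_mem_nhds (hsub ht).1 (hsub ht).2
  refine ⟨fun t => (γ t).1, fun t => (γ t).2, by simp [hγ0], by simp [hγ0], fun t => ⟨?_, ?_⟩⟩
  · exact hasFDerivAt_fst.comp_hasDerivAt t (hγ t)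
  · exact hasFDerivAt_snd.comp_hasDerivAt t (hγ t)

end SecondOrder

theorem HasDerivAt.nonpos_of_isMinOn_Icc {f : ℝ → ℝ} {f' a T : ℝ} (hf : HasDerivAt f f' T)
    (haT : a < T) (hmin : IsMinOn f (Icc a T) T) : f' ≤ 0 := by
  have hcone : a - T ∈ posTangentConeAt (Icc a T) T :=
    sub_mem_posTangentConeAt_of_segment_subset ((convex_Icc a T).segment_subset
      (right_mem_Icc.2 haT.le) (left_mem_Icc.2 haT.le))
  have := hmin.localize.hasFDerivWithinAt_nonneg hf.hasDerivWithinAt.hasFDerivWithinAt hcone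
  rw [ContinuousLinearMap.toSpanSingleton_apply, smul_eq_mul] at this
  nlinarith

theorem exists_forall_Ioc_lt_of_deriv_nonpos_of_deriv2_neg {f f' f'' : ℝ → ℝ} {T : ℝ}
    (hf : ∀ t, HasDerivAt f (f' t) t) (hf' : ∀ t, HasDerivAt f' (f'' t) t)
    (hf'' : ContinuousAt f'' T) (h'T : f' T ≤ 0) (h''T : f'' T < 0) :
    ∃ δ > 0, ∀ s ∈ Ioc T (T + δ), f s < f T := by
  obtain ⟨ε, hε, hneg⟩ := Metric.eventually_nhds_iff.mp (hf''.eventually (gt_mem_nhds h''T))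
  refine ⟨ε / 2, by positivity, ?_⟩
  have hint : interior (Icc T (T + ε / 2)) = Ioo T (T + ε / 2) := interior_Icc
  have hf'anti : StrictAntiOn f' (Icc T (T + ε / 2)) := by
    refine strictAntiOn_of_hasDerivWithinAt_neg (convex_Icc _ _)
      (HasDerivAt.continuousOn fun t _ => hf' t) (fun t _ => (hf' t).hasDerivWithinAt) ?_
    rw [hint]
    intro t ht
    apply hneg
    rw [Real.dist_eq, abs_lt]
    constructor <;> linarith [ht.1, ht.2]
  have hfanti : StrictAntiOn f (Icc T (T + ε / 2)) := by
    refine strictAntiOn_of_hasDerivWithinAt_neg (convex_Icc _ _)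
      (HasDerivAt.continuousOn fun t _ => hf t) (fun t _ => (hf t).hasDerivWithinAt) ?_
    rw [hint]
    intro t ht
    exact (hf'anti (left_mem_Icc.2 (by linarith)) (Ioo_subset_Icc_self ht) ht.1).trans_le h'T
  intro s hs
  exact hfanti (left_mem_Icc.2 (by linarith)) (Ioc_subset_Icc_self hs) hs.1

/-- `FallsBelowBefore (-f) (-c) (-a)` says that `f` rises above `c` before reaching `a`. -/
def FallsBelowBefore (f : ℝ → ℝ) (a c : ℝ) : Prop :=
  ∃ t ≥ 0, f t < a ∧ ∀ s ∈ Icc 0 t, f s < c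

theorem FallsBelowBefore.not_neg {f : ℝ → ℝ} {a c : ℝ} (h : FallsBelowBefore f a c) :
    ¬ FallsBelowBefore (-f) (-c) (-a) := by
  rintro ⟨t₂, ht₂, hc, hbelow⟩
  obtain ⟨t₁, ht₁, ha, habove⟩ := h
  simp only [Pi.neg_apply, neg_lt_neg_iff] at hc hbelow
  rcases le_total t₁ t₂ with h | h
  · exact (hbelow t₁ ⟨ht₁, h⟩).not_gt ha
  · exact (habove t₂ ⟨ht₂, h⟩).not_gt hc

theorem fallsBelowBefore_of_deriv2_neg {f f' f'' : ℝ → ℝ} {a c T : ℝ}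
    (hf : ∀ t, HasDerivAt f (f' t) t) (hf' : ∀ t, HasDerivAt f' (f'' t) t) (hf'' : Continuous f'')
    (hT : 0 ≤ T) (hfT : f T = a) (h'T : f' T ≤ 0) (h''T : f'' T < 0) (hac : a < c)
    (hbefore : ∀ s ∈ Ico 0 T, f s < c) : FallsBelowBefore f a c := by
  obtain ⟨δ, hδ, hlt⟩ :=
    exists_forall_Ioc_lt_of_deriv_nonpos_of_deriv2_neg hf hf' hf''.continuousAt h'T h''T
  rw [hfT] at hlt
  refine ⟨T + δ, by linarith, hlt _ ⟨by linarith, le_rfl⟩, fun s hs => ?_⟩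
  rcases lt_or_ge s T with hsT | hsT
  · exact hbefore s ⟨hs.1, hsT⟩
  rcases hsT.eq_or_lt with rfl | hsT
  · rwa [hfT]
  · exact (hlt s ⟨hsT, hs.2⟩).trans hac

theorem exists_first_exit {f : ℝ → ℝ} (hf : Continuous f) {a c t : ℝ} (h0 : f 0 ∈ Ioo a c)
    (ht : 0 ≤ t) (hexit : f t ∉ Ioo a c) :
    ∃ T > 0, (f T = a ∨ f T = c) ∧ ∀ s ∈ Ico 0 T, f s ∈ Ioo a c := by
  obtain ⟨T, ⟨hTt, hTexit⟩, hleast⟩ := (isCompact_Icc.inter_right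
    (isOpen_Ioo.preimage hf).isClosed_compl).exists_isLeast ⟨t, ⟨ht, le_rfl⟩, hexit⟩
  have hbefore : ∀ s ∈ Ico 0 T, f s ∈ Ioo a c := fun s hs => by
    by_contra hs'
    exact hs.2.not_ge (hleast ⟨⟨hs.1, hs.2.le.trans hTt.2⟩, hs'⟩)
  have hT : 0 < T := hTt.1.lt_of_ne (by rintro rfl; exact hTexit h0)
  have hTIcc : f T ∈ Icc a c :=
    isClosed_Icc.mem_of_tendsto (hf.continuousAt.mono_left nhdsWithin_le_nhds)
      (eventually_of_mem (Ioo_mem_nhdsLT hT) fun s hs =>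
        Ioo_subset_Icc_self (hbefore s ⟨hs.1.le, hs.2⟩))
  refine ⟨T, hT, ?_, hbefore⟩
  rcases hTIcc.1.eq_or_lt with h | h
  · exact Or.inl h.symm
  rcases hTIcc.2.eq_or_lt with h' | h'
  · exact Or.inr h'
  · exact absurd ⟨h, h'⟩ hTexit

theorem forall_mem_Ioo_of_not_fallsBelowBefore {f f' f'' : ℝ → ℝ} {a c : ℝ}
    (hf : ∀ t, HasDerivAt f (f' t) t) (hf' : ∀ t, HasDerivAt f' (f'' t) t) (hf'' : Continuous f'')
    (ha : ∀ t, f t = a → f'' t < 0) (hc : ∀ t, f t = c → 0 < f'' t) (h0 : f 0 ∈ Ioo a c)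
    (hbelow : ¬ FallsBelowBefore f a c) (habove : ¬ FallsBelowBefore (-f) (-c) (-a)) :
    ∀ t ≥ 0, f t ∈ Ioo a c := by
  intro t ht
  by_contra hexit
  obtain ⟨T, hT, hTac, hbefore⟩ :=
    exists_first_exit (continuous_iff_continuousAt.2 fun t => (hf t).continuousAt) h0 ht hexit
  have hmin : ∀ g : ℝ → ℝ, (∀ s ∈ Ico 0 T, g T < g s) → IsMinOn g (Icc 0 T) T :=
    fun g hg => isMinOn_iff.2 fun s hs => by
      rcases hs.2.eq_or_lt with rfl | h
      · exact le_rfl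
      · exact (hg s ⟨hs.1, h⟩).le
  rcases hTac with hTa | hTc
  · refine hbelow (fallsBelowBefore_of_deriv2_neg hf hf' hf'' hT.le hTa ?_ (ha T hTa)
      (h0.1.trans h0.2) fun s hs => (hbefore s hs).2)
    exact (hf T).nonpos_of_isMinOn_Icc hT (hmin f fun s hs => hTa ▸ (hbefore s hs).1)
  · refine habove (fallsBelowBefore_of_deriv2_neg (fun t => (hf t).neg) (fun t => (hf' t).neg)
      hf''.neg hT.le (by simp [hTc]) ?_ (by simpa using hc T hTc)
      (neg_lt_neg (h0.1.trans h0.2)) fun s hs => by simpa using (hbefore s hs).1)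
    exact (hf T).neg.nonpos_of_isMinOn_Icc hT
      (hmin (-f) fun s hs => by simpa [hTc] using (hbefore s hs).2)

theorem isOpen_setOf_fallsBelowBefore {A : ℝ → ℝ → ℝ} (hA : ∀ φ, Continuous (A φ))
    (hdep : ∀ b, ∃ C > 0, ∀ φ ψ, ∀ t ∈ Icc 0 b, dist (A φ t) (A ψ t) ≤ C * dist φ ψ)
    (a c : ℝ) : IsOpen {φ | FallsBelowBefore (A φ) a c} := by
  refine Metric.isOpen_iff.2 fun φ ⟨t, ht, hta, htc⟩ => ?_
  obtain ⟨s₀, hs₀, hmax⟩ :=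
    isCompact_Icc.exists_isMaxOn (nonempty_Icc.2 ht) (hA φ).continuousOn
  obtain ⟨C, hC, hCdep⟩ := hdep t
  set δ := min (a - A φ t) (c - A φ s₀)
  have hδ : 0 < δ := lt_min (by linarith) (by linarith [htc s₀ hs₀])
  refine ⟨δ / C, by positivity, fun ψ hψ => ?_⟩
  have hclose : ∀ s ∈ Icc 0 t, A ψ s < A φ s + δ := fun s hs => by
    have hCδ : C * dist ψ φ < δ := by
      rw [Metric.mem_ball] at hψ
      calc C * dist ψ φ < C * (δ / C) := by gcongr
        _ = δ := by field_simp
    linarith [hCdep ψ φ s hs, le_abs_self (A ψ s - A φ s), Real.dist_eq (A ψ s) (A φ s)]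
  exact ⟨t, ht, by linarith [hclose t (right_mem_Icc.2 ht), min_le_left (a - A φ t) (c - A φ s₀)],
    fun s hs => by
      linarith [hclose s hs, min_le_right (a - A φ t) (c - A φ s₀), isMaxOn_iff.1 hmax s hs]⟩

theorem exists_mem_Ioo_notMem_of_isOpen {U V : Set ℝ} {a b : ℝ} (hab : a ≤ b)
    (hU : IsOpen U) (hV : IsOpen V) (hUV : Disjoint U V) (ha : a ∈ U) (hb : b ∈ V) :
    ∃ x ∈ Ioo a b, x ∉ U ∧ x ∉ V := by
  by_contra! h
  have hcover : Icc a b ⊆ U ∪ V := fun x hx => by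
    rcases hx.1.eq_or_lt with rfl | hax
    · exact Or.inl ha
    rcases hx.2.eq_or_lt with rfl | hxb
    · exact Or.inr hb
    by_cases hxU : x ∈ U
    · exact Or.inl hxU
    · exact Or.inr (h x ⟨hax, hxb⟩ hxU)
  obtain ⟨x, -, hxU, hxV⟩ := isPreconnected_Icc U V hU hV hcover ⟨a, left_mem_Icc.2 hab, ha⟩
    ⟨b, right_mem_Icc.2 hab, hb⟩
  exact hUV.notMem_of_mem_left hxU hxV

theorem contDiff_two_of_hasDerivAt {f f' f'' : ℝ → ℝ} (hf : ∀ t, HasDerivAt f (f' t) t)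
    (hf' : ∀ t, HasDerivAt f' (f'' t) t) (hf'' : Continuous f'') : ContDiff ℝ 2 f := by
  have hderiv : deriv f = f' := funext fun t => (hf t).deriv
  have hderiv' : deriv f' = f'' := funext fun t => (hf' t).deriv
  rw [show (2 : WithTop ℕ∞) = 1 + 1 from rfl, contDiff_succ_iff_deriv, hderiv,
    contDiff_one_iff_deriv, hderiv']
  exact ⟨fun t => (hf t).differentiableAt, by simp, fun t => (hf' t).differentiableAt, hf''⟩

noncomputable def pendulumAccel (g : ℝ) (u : ℝ → ℝ) (t a : ℝ) : ℝ := -g * cos a + u t * sin a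

theorem lipschitzWith_pendulumAccel (g : ℝ) (u : ℝ → ℝ) (t : ℝ) :
    LipschitzWith (‖g‖₊ + ‖u t‖₊) (pendulumAccel g u t) := by
  refine LipschitzWith.of_dist_le_mul fun a b => ?_
  have hcos := Real.lipschitzWith_cos.dist_le_mul a b
  have hsin := Real.lipschitzWith_sin.dist_le_mul a b
  simp only [NNReal.coe_one, one_mul, Real.dist_eq] at hcos hsin
  simp only [pendulumAccel, Real.dist_eq, NNReal.coe_add, coe_nnnorm, Real.norm_eq_abs]
  calc |-g * cos a + u t * sin a - (-g * cos b + u t * sin b)|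
      = |-g * (cos a - cos b) + u t * (sin a - sin b)| := by ring_nf
    _ ≤ |g| * |cos a - cos b| + |u t| * |sin a - sin b| := by
      refine (abs_add_le _ _).trans_eq ?_
      rw [abs_mul, abs_mul, abs_neg]
    _ ≤ (|g| + |u t|) * |a - b| := by
      nlinarith [abs_nonneg g, abs_nonneg (u t)]

theorem abs_pendulumAccel_le (g : ℝ) (u : ℝ → ℝ) (t a : ℝ) :
    |pendulumAccel g u t a| ≤ |g| + |u t| := by
  unfold pendulumAccel
  refine (abs_add_le _ _).trans (add_le_add ?_ ?_) <;> rw [abs_mul]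
  · rw [abs_neg]; exact mul_le_of_le_one_right (abs_nonneg g) (abs_cos_le_one a)
  · exact mul_le_of_le_one_right (abs_nonneg _) (abs_sin_le_one a)

theorem Continuous.pendulumAccel {g : ℝ} {u α : ℝ → ℝ} (hu : Continuous u) (hα : Continuous α) :
    Continuous fun t => pendulumAccel g u t (α t) := by
  unfold _root_.pendulumAccel; fun_prop

theorem exists_pendulum_flow (g : ℝ) {u : ℝ → ℝ} (hu : Continuous u) :
    ∃ α α' : ℝ → ℝ → ℝ, (∀ φ, α φ 0 = φ) ∧ (∀ φ, α' φ 0 = 0) ∧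
      (∀ φ t, HasDerivAt (α φ) (α' φ t) t) ∧
      (∀ φ t, HasDerivAt (α' φ) (pendulumAccel g u t (α φ t)) t) ∧
      ∀ b, ∃ C > 0, ∀ φ ψ, ∀ t ∈ Icc 0 b, dist (α φ t) (α ψ t) ≤ C * dist φ ψ := by
  have hF : ∀ T, ∃ K : ℝ≥0, ∃ C, ∀ t ∈ Icc (-T) T,
      LipschitzWith K (pendulumAccel g u t) ∧ ∀ x, ‖pendulumAccel g u t x‖ ≤ C := fun T => by
    obtain ⟨M, hM⟩ := (isCompact_Icc.image_of_continuousOn hu.nnnorm.continuousOn).bddAbove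
    have hMt : ∀ t ∈ Icc (-T) T, ‖u t‖₊ ≤ M := fun t ht => hM (mem_image_of_mem _ ht)
    refine ⟨‖g‖₊ + M, |g| + M, fun t ht => ⟨(lipschitzWith_pendulumAccel g u t).weaken ?_,
      fun x => (Real.norm_eq_abs _).trans_le ((abs_pendulumAccel_le g u t x).trans ?_)⟩⟩
    · gcongr; exact hMt t ht
    · have := hMt t ht
      rw [← NNReal.coe_le_coe, coe_nnnorm, Real.norm_eq_abs] at this
      linarith
  choose α α' hα0 hα'0 hsol using fun φ : ℝ =>
    exists_forall_hasDerivAt_secondOrder hF (fun _ => hu.pendulumAccel continuous_const) φ 0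
  refine ⟨α, α', hα0, hα'0, fun φ t => (hsol φ t).1, fun φ t => (hsol φ t).2, fun b => ?_⟩
  obtain ⟨K, _, hK⟩ := hF b
  refine ⟨exp (max 1 K * b), exp_pos _, fun φ ψ t ht => ?_⟩
  have := dist_le_of_trajectories_secondOrder
    (fun s hs => (hK s ⟨by linarith [hs.1, ht.1, ht.2], hs.2.le⟩).1) (hsol φ) (hsol ψ) ht
  simpa [hα0, hα'0, Prod.dist_eq, mul_comm] using this

theorem isPendulumSolution_of_hasDerivAt {g : ℝ} {u α α' : ℝ → ℝ} (hu : Continuous u)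
    (hα : ∀ t, HasDerivAt α (α' t) t) (hα' : ∀ t, HasDerivAt α' (pendulumAccel g u t (α t)) t) :
    IsPendulumSolution g u α := by
  have hcont : Continuous α := continuous_iff_continuousAt.2 fun t => (hα t).continuousAt
  refine ⟨contDiff_two_of_hasDerivAt hα hα' (hu.pendulumAccel hcont), fun t => ?_⟩
  rw [funext fun t => (hα t).deriv]
  exact (hα' t).deriv

/-- Infinite-horizon Whitney problem: there is an initial angle `φ ∈ (0, π)`
from which the rod, released at rest, stays strictly above the floor for all
future times `t ≥ 0`. -/
theorem whitney_infinite_horizon (g : ℝ) (hg : 0 < g) (u : ℝ → ℝ) (hu : Continuous u) :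
    ∃ φ ∈ Set.Ioo (0 : ℝ) Real.pi, ∃ α : ℝ → ℝ,
      IsPendulumSolution g u α ∧ α 0 = φ ∧ deriv α 0 = 0 ∧
        ∀ t : ℝ, 0 ≤ t → α t ∈ Set.Ioo (0 : ℝ) Real.pi := by
  obtain ⟨α, α', hα0, hα'0, hα, hα', hdep⟩ := exists_pendulum_flow g hu
  have hcont : ∀ φ, Continuous (α φ) := fun φ =>
    continuous_iff_continuousAt.2 fun t => (hα φ t).continuousAt
  have hα'' : ∀ φ, Continuous fun t => pendulumAccel g u t (α φ t) :=
    fun φ => hu.pendulumAccel (hcont φ)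
  have hL := isOpen_setOf_fallsBelowBefore hcont hdep 0 π
  have hR := isOpen_setOf_fallsBelowBefore (A := fun φ => -α φ) (fun φ => (hcont φ).neg)
    (fun b => (hdep b).imp fun C ⟨hC, h⟩ => ⟨hC, by simpa using h⟩) (-π) (-0)
  have h0 : FallsBelowBefore (α 0) 0 π :=
    fallsBelowBefore_of_deriv2_neg (hα 0) (hα' 0) (hα'' 0) le_rfl (hα0 0) (hα'0 0).le
      (by simp [hα0, pendulumAccel, hg]) pi_pos (by simp)
  have hπ : FallsBelowBefore (-α π) (-π) (-0) :=
    fallsBelowBefore_of_deriv2_neg (fun t => (hα π t).neg) (fun t => (hα' π t).neg) (hα'' π).neg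
      le_rfl (by simp [hα0]) (by simp [hα'0]) (by simp [hα0, pendulumAccel, hg])
      (by simp [pi_pos]) (by simp)
  obtain ⟨φ, hφ, hφL, hφR⟩ := exists_mem_Ioo_notMem_of_isOpen pi_pos.le hL hR
    (disjoint_left.2 fun φ h => h.not_neg) h0 hπ
  refine ⟨φ, hφ, α φ, isPendulumSolution_of_hasDerivAt hu (hα φ) (hα' φ), hα0 φ,
    (hα φ 0).deriv.trans (hα'0 φ), ?_⟩
  exact forall_mem_Ioo_of_not_fallsBelowBefore (hα φ) (hα' φ) (hα'' φ)
    (fun t ht => by simp [ht, pendulumAccel, hg]) (fun t ht => by simp [ht, pendulumAccel, hg])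
    (by rwa [hα0]) hφL hφR
end

section
/- Near-horizontal initial positions fall to the near side (left): for every g > 0 and every continuous u : ℝ → ℝ there exists ε > 0 such that for every φ ∈ (π − ε, π) and every solution α with α(0) = φ and α'(0) = 0, there exists t₁ > 0 with α(t₁) = π and α(s) ∈ (π − ε, π) for all s ∈ [0, t₁). -/
/-!
Near `π` gravity dominates: `-g cos α ≈ g`, while the platform term `u sin α` is of order
`sup |u| · ε`. So for `ε` small the rod accelerates towards the floor at rate at least `g / 2` as
long as it stays within `ε` of `π`. Starting at rest it therefore stays in `(π - ε, π)` and
covers the distance `ε ≤ g / 4` before time `1`; the first exit from `(π - ε, π)` is through `π`.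
-/

open Set Real

lemma quadratic_le_of_le_second_deriv {f f' f'' : ℝ → ℝ} {a b c : ℝ}
    (hf : ∀ x ∈ Icc a b, HasDerivAt f (f' x) x) (hf' : ∀ x ∈ Icc a b, HasDerivAt f' (f'' x) x)
    (hc : ∀ x ∈ Ico a b, c ≤ f'' x) {x : ℝ} (hx : x ∈ Icc a b) :
    f a + f' a * (x - a) + c * (x - a) ^ 2 / 2 ≤ f x := by
  have hslope : ∀ y ∈ Icc a b, f' a + c * (y - a) ≤ f' y := by
    refine image_le_of_deriv_right_le_deriv_boundary (f' := fun _ => c) (by fun_prop)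
      (fun y _ => ?_) (by simp) (fun y hy => (hf' y hy).continuousAt.continuousWithinAt)
      (fun y hy => (hf' y (Ico_subset_Icc_self hy)).hasDerivWithinAt) hc
    simpa using ((((hasDerivAt_id' y).sub_const a).const_mul c).const_add (f' a)).hasDerivWithinAt
  refine image_le_of_deriv_right_le_deriv_boundary
    (f := fun y => f a + f' a * (y - a) + c * (y - a) ^ 2 / 2)
    (f' := fun y => f' a + c * (y - a)) (by fun_prop) (fun y _ => ?_) (by simp)
    (fun y hy => (hf y hy).continuousAt.continuousWithinAt)
    (fun y hy => (hf y (Ico_subset_Icc_self hy)).hasDerivWithinAt)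
    (fun y hy => hslope y (Ico_subset_Icc_self hy)) hx
  have hlin := ((hasDerivAt_id' y).sub_const a).const_mul (f' a)
  have hsq := (((hasDerivAt_id' y).sub_const a).pow 2).const_mul c |>.div_const 2
  exact ((hlin.const_add (f a)).add hsq).hasDerivWithinAt.congr_deriv (by ring)

lemma exists_first_exit_s6 {X : Type*} [TopologicalSpace X] {f : ℝ → X} {U : Set X} {a b : ℝ}
    (hf : ContinuousOn f (Icc a b)) (hU : IsOpen U) (ha : f a ∈ U)
    (hexit : ∃ x ∈ Icc a b, f x ∉ U) :
    ∃ t ∈ Ioc a b, f t ∈ frontier U ∧ ∀ s ∈ Ico a t, f s ∈ U := by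
  set K := Icc a b ∩ f ⁻¹' Uᶜ
  have hKne : K.Nonempty := hexit
  have hKbdd : BddBelow K := ⟨a, fun y hy => hy.1.1⟩
  have htK : sInf K ∈ K :=
    (hf.preimage_isClosed_of_isClosed isClosed_Icc hU.isClosed_compl).csInf_mem hKne hKbdd
  have hat : a < sInf K := htK.1.1.lt_of_ne (by rintro h; exact htK.2 (h ▸ ha))
  have hbefore : ∀ s ∈ Ico a (sInf K), f s ∈ U := fun s hs => by
    by_contra hsU
    exact notMem_of_lt_csInf hs.2 hKbdd ⟨⟨hs.1, hs.2.le.trans htK.1.2⟩, hsU⟩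
  have hclosure : f (sInf K) ∈ closure U := by
    refine ((hf (sInf K) htK.1).mono (Ico_subset_Icc_self.trans ?_)).mem_closure
      (by simp [closure_Ico hat.ne, hat.le]) hbefore
    exact Icc_subset_Icc_right htK.1.2
  exact ⟨sInf K, ⟨hat, htK.1.2⟩, by rw [hU.frontier_eq]; exact ⟨hclosure, htK.2⟩, hbefore⟩

lemma le_neg_mul_cos_add_mul_sin {g M v ε x : ℝ} (hg : 0 ≤ g) (hv : |v| ≤ M) (hε₀ : 0 ≤ ε)
    (hε₁ : ε ≤ 1) (hε : ε * (g + 2 * M) ≤ g) (hx : x ∈ Icc (π - ε) π) :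
    g / 2 ≤ -g * cos x + v * sin x := by
  have hπ := pi_gt_three
  have hcos : cos x ≤ -(1 - ε ^ 2 / 2) :=
    calc cos x ≤ cos (π - ε) := cos_le_cos_of_nonneg_of_le_pi (by linarith [hx.1]) hx.2 hx.1
      _ = -cos ε := cos_pi_sub ε
      _ ≤ -(1 - ε ^ 2 / 2) := neg_le_neg one_sub_sq_div_two_le_cos
  have hsin : |sin x| ≤ ε := by
    rw [← sin_pi_sub, abs_of_nonneg (sin_nonneg_of_nonneg_of_le_pi (by linarith [hx.2])
      (by linarith [hx.1]))]
    exact (sin_le (by linarith [hx.2])).trans (by linarith [hx.1])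
  have hforcing : -(M * ε) ≤ v * sin x := by
    have := mul_le_mul hv hsin (abs_nonneg _) ((abs_nonneg v).trans hv)
    rw [← abs_mul] at this
    linarith [neg_abs_le (v * sin x)]
  nlinarith [mul_le_mul_of_nonneg_left hε₁ (mul_nonneg hg hε₀)]

/-- Near-horizontal initial positions fall to the near side (left): if the rod
starts at rest sufficiently close to the left horizontal position `π`, it
reaches the floor on the left, staying close to the floor until contact. -/
theorem pendulum_falls_left_near_floor (g : ℝ) (hg : 0 < g)
    (u : ℝ → ℝ) (hu : Continuous u) :
    ∃ ε > (0 : ℝ), ∀ φ ∈ Set.Ioo (Real.pi - ε) Real.pi, ∀ α : ℝ → ℝ,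
      IsPendulumSolution g u α → α 0 = φ → deriv α 0 = 0 →
        ∃ t₁ > (0 : ℝ), α t₁ = Real.pi ∧
          ∀ s ∈ Set.Ico (0 : ℝ) t₁, α s ∈ Set.Ioo (Real.pi - ε) Real.pi := by
  obtain ⟨M, hM⟩ := isCompact_Icc.exists_bound_of_continuousOn (hu.continuousOn (s := Icc 0 1))
  have hM₀ : 0 ≤ M := (norm_nonneg _).trans (hM 0 ⟨le_rfl, zero_le_one⟩)
  set ε := g / (g + 2 * M + 4)
  have hε₀ : 0 < ε := by positivity
  have hε₁ : ε ≤ 1 := (div_le_one (by positivity)).2 (by linarith)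
  have hεg : ε ≤ g / 4 := div_le_div_of_nonneg_left hg.le (by norm_num) (by linarith)
  have hεM : ε * (g + 2 * M) ≤ g := by
    rw [div_mul_eq_mul_div, div_le_iff₀ (by positivity)]
    nlinarith
  refine ⟨ε, hε₀, fun φ hφ α ⟨hα, hαeq⟩ hα0 hα'0 => ?_⟩
  have hgrowth : ∀ b ≤ 1, (∀ s ∈ Ico 0 b, α s ∈ Ioo (π - ε) π) →
      ∀ x ∈ Icc 0 b, φ + g / 4 * x ^ 2 ≤ α x := by
    intro b hb hstay x hx
    have := quadratic_le_of_le_second_deriv (c := g / 2)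
      (fun y _ => (hα.differentiable two_ne_zero y).hasDerivAt)
      (fun y _ => (hα.differentiable_deriv_two y).hasDerivAt)
      (fun s hs => hαeq s ▸ le_neg_mul_cos_add_mul_sin hg.le (hM s ⟨hs.1, hs.2.le.trans hb⟩)
        hε₀.le hε₁ hεM (Ioo_subset_Icc_self (hstay s hs))) hx
    rw [hα0, hα'0] at this
    linarith
  obtain ⟨t₁, ht₁, hfront, hstay⟩ := exists_first_exit_s6 hα.continuous.continuousOn isOpen_Ioo
    (hα0 ▸ hφ) (by
      by_contra! hinside
      have := hgrowth 1 le_rfl (fun s hs => hinside s (Ico_subset_Icc_self hs)) 1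
        ⟨zero_le_one, le_rfl⟩
      linarith [(hinside 1 ⟨zero_le_one, le_rfl⟩).2, hφ.1])
  rw [frontier_Ioo (by linarith)] at hfront
  have hα₁ := hgrowth t₁ ht₁.2 hstay t₁ ⟨ht₁.1.le, le_rfl⟩
  refine ⟨t₁, ht₁.1, hfront.resolve_left fun h => ?_, hstay⟩
  nlinarith [hφ.1, sq_nonneg t₁]
end

section
/- Continuous dependence on the initial angle: the map (φ, t) ↦ A φ t is jointly continuous as a function ℝ × ℝ → ℝ. -/
open Set Real NNReal

theorem HasDerivAt.comp_neg {E : Type*} [NormedAddCommGroup E] [NormedSpace ℝ E] {f : ℝ → E}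
    {f' : E} {t : ℝ} (hf : HasDerivAt f f' (-t)) : HasDerivAt (fun s => f (-s)) (-f') t := by
  simpa [Function.comp_def] using hf.scomp t (hasDerivAt_neg t)

section Gronwall

variable {E : Type*} [NormedAddCommGroup E] [NormedSpace ℝ E] {v : ℝ → E → E} {K : ℝ≥0}
  {T : ℝ} {f f' : ℝ → E}

theorem dist_le_of_trajectories_ODE_Icc_zero (hv : ∀ t ∈ Icc 0 T, LipschitzWith K (v t))
    (hf : ∀ t ∈ Icc 0 T, HasDerivAt f (v t (f t)) t)
    (hf' : ∀ t ∈ Icc 0 T, HasDerivAt f' (v t (f' t)) t) {t : ℝ} (ht : t ∈ Icc 0 T) :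
    dist (f t) (f' t) ≤ dist (f 0) (f' 0) * exp (K * t) := by
  simpa using dist_le_of_trajectories_ODE_of_mem (s := fun _ => univ)
    (fun t ht => (hv t (Ico_subset_Icc_self ht)).lipschitzOnWith)
    (fun t ht => (hf t ht).continuousAt.continuousWithinAt)
    (fun t ht => (hf t (Ico_subset_Icc_self ht)).hasDerivWithinAt) (fun _ _ => trivial)
    (fun t ht => (hf' t ht).continuousAt.continuousWithinAt)
    (fun t ht => (hf' t (Ico_subset_Icc_self ht)).hasDerivWithinAt) (fun _ _ => trivial)
    le_rfl t ht

theorem dist_le_of_trajectories_ODE_Icc_neg (hv : ∀ t ∈ Icc (-T) T, LipschitzWith K (v t))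
    (hf : ∀ t ∈ Icc (-T) T, HasDerivAt f (v t (f t)) t)
    (hf' : ∀ t ∈ Icc (-T) T, HasDerivAt f' (v t (f' t)) t) {t : ℝ} (ht : t ∈ Icc (-T) T) :
    dist (f t) (f' t) ≤ dist (f 0) (f' 0) * exp (K * |t|) := by
  have hsub : Icc 0 T ⊆ Icc (-T) T := fun s hs => ⟨by linarith [hs.1, hs.2], hs.2⟩
  have hneg {s : ℝ} (hs : s ∈ Icc 0 T) : -s ∈ Icc (-T) T :=
    ⟨neg_le_neg hs.2, by linarith [hs.1, hs.2]⟩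
  rcases le_total 0 t with h | h
  · rw [abs_of_nonneg h]
    exact dist_le_of_trajectories_ODE_Icc_zero (fun s hs => hv s (hsub hs))
      (fun s hs => hf s (hsub hs)) (fun s hs => hf' s (hsub hs)) ⟨h, ht.2⟩
  · have := dist_le_of_trajectories_ODE_Icc_zero (v := fun s x => -v (-s) x)
      (f := fun s => f (-s)) (f' := fun s => f' (-s)) (fun s hs => (hv (-s) (hneg hs)).neg)
      (fun s hs => (hf (-s) (hneg hs)).comp_neg) (fun s hs => (hf' (-s) (hneg hs)).comp_neg)
      (t := -t) ⟨by linarith, by linarith [ht.1]⟩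
    simpa [abs_of_nonpos h] using this

end Gronwall

section Pendulum

variable {g : ℝ} {u : ℝ → ℝ}

noncomputable def pendulumField (g : ℝ) (u : ℝ → ℝ) (t : ℝ) (x : ℝ × ℝ) : ℝ × ℝ :=
  (x.2, -g * cos x.1 + u t * sin x.1)

theorem lipschitzWith_pendulumField (t : ℝ) :
    LipschitzWith (max 1 (‖g‖₊ + ‖u t‖₊)) (pendulumField g u t) := by
  refine LipschitzWith.prod_snd.prodMk ?_
  simpa using ((lipschitzWith_smul (-g)).comp (lipschitzWith_cos.comp LipschitzWith.prod_fst)).add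
    ((lipschitzWith_smul (u t)).comp (lipschitzWith_sin.comp LipschitzWith.prod_fst))

theorem IsPendulumSolution.hasDerivAt_phase {α : ℝ → ℝ} (hα : IsPendulumSolution g u α) (t : ℝ) :
    HasDerivAt (fun s => (α s, deriv α s)) (pendulumField g u t (α t, deriv α t)) t := by
  have h₁ := (hα.1.differentiable (by norm_num) t).hasDerivAt
  have h₂ := (hα.1.differentiable_deriv_two t).hasDerivAt
  rw [hα.2 t] at h₂
  exact h₁.prodMk h₂

theorem IsPendulumSolution.dist_phase_le {α β : ℝ → ℝ} (hα : IsPendulumSolution g u α)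
    (hβ : IsPendulumSolution g u β) {T : ℝ} {M : ℝ≥0} (hM : ∀ s ∈ Icc (-T) T, ‖u s‖₊ ≤ M)
    {t : ℝ} (ht : t ∈ Icc (-T) T) :
    dist (α t, deriv α t) (β t, deriv β t) ≤
      dist (α 0, deriv α 0) (β 0, deriv β 0) * exp (max 1 (‖g‖₊ + M) * |t|) :=
  dist_le_of_trajectories_ODE_Icc_neg
    (fun s hs => (lipschitzWith_pendulumField s).weaken (by gcongr; exact hM s hs))
    (fun s _ => hα.hasDerivAt_phase s) (fun s _ => hβ.hasDerivAt_phase s) ht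

theorem lipschitzWith_pendulum_of_rest {A : ℝ → ℝ → ℝ}
    (hA : ∀ φ : ℝ, IsPendulumSolution g u (A φ) ∧ A φ 0 = φ ∧ deriv (A φ) 0 = 0)
    {T : ℝ} {M : ℝ≥0} (hM : ∀ s ∈ Icc (-T) T, ‖u s‖₊ ≤ M) {t : ℝ} (ht : t ∈ Icc (-T) T) :
    LipschitzWith (exp (max 1 (‖g‖₊ + M) * T)).toNNReal (fun φ => A φ t) := by
  refine LipschitzWith.of_dist_le_mul fun φ ψ => ?_
  obtain ⟨hφ, hφ₀, hφ₀'⟩ := hA φ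
  obtain ⟨hψ, hψ₀, hψ₀'⟩ := hA ψ
  have hT : |t| ≤ T := abs_le.2 ht
  calc dist (A φ t) (A ψ t) ≤ dist (A φ t, deriv (A φ) t) (A ψ t, deriv (A ψ) t) := by
        rw [Prod.dist_eq]; exact le_max_left _ _
    _ ≤ dist φ ψ * exp (max 1 (‖g‖₊ + M) * |t|) := by
        simpa [hφ₀, hφ₀', hψ₀, hψ₀'] using hφ.dist_phase_le hψ hM ht
    _ ≤ (exp (max 1 (‖g‖₊ + M) * T)).toNNReal * dist φ ψ := by
        rw [coe_toNNReal _ (exp_pos _).le, mul_comm]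
        gcongr

end Pendulum

theorem pendulum_continuous_dependence_general (g : ℝ)
    (u : ℝ → ℝ) (hu : Continuous u) (A : ℝ → ℝ → ℝ)
    (hA : ∀ φ : ℝ, IsPendulumSolution g u (A φ) ∧ A φ 0 = φ ∧ deriv (A φ) 0 = 0) :
    Continuous fun p : ℝ × ℝ => A p.1 p.2 := by
  refine continuous_iff_continuousAt.2 fun p => ?_
  set T := |p.2| + 1
  obtain ⟨M, hM⟩ := (isCompact_Icc (a := -T) (b := T)).bddAbove_image hu.nnnorm.continuousOn
  have hcont : ContinuousOn (fun p : ℝ × ℝ => A p.1 p.2) (univ ×ˢ Icc (-T) T) :=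
    continuousOn_prod_of_continuousOn_lipschitzOnWith _ _
      (fun φ _ => (hA φ).1.1.continuous.continuousOn)
      (fun t ht =>
        (lipschitzWith_pendulum_of_rest hA (fun s hs => hM ⟨s, hs, rfl⟩) ht).lipschitzOnWith)
  exact hcont.continuousAt (prod_mem_nhds Filter.univ_mem
    (Icc_mem_nhds (by linarith [neg_abs_le p.2]) (by linarith [le_abs_self p.2])))

/-- Continuous dependence on the initial angle: if `A φ` is the solution
starting at rest at angle `φ`, then `(φ, t) ↦ A φ t` is jointly continuous. -/
theorem pendulum_continuous_dependence (g : ℝ) (hg : 0 < g)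
    (u : ℝ → ℝ) (hu : Continuous u) (A : ℝ → ℝ → ℝ)
    (hA : ∀ φ : ℝ, IsPendulumSolution g u (A φ) ∧ A φ 0 = φ ∧ deriv (A φ) 0 = 0) :
    Continuous fun p : ℝ × ℝ => A p.1 p.2 :=
  pendulum_continuous_dependence_general g u hu A hA
end

section
/- The set of never-falling initial angles is relatively closed in (0, π): the set N := {φ ∈ (0, π) : A φ t ∈ (0, π) for all t ≥ 0} is closed in the subspace topology of the interval (0, π), i.e. (0, π) \ N is open. -/
open Set Real Filter Topology
open scoped NNReal

section SecondDeriv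

variable {f : ℝ → ℝ} {x₀ : ℝ}

theorem IsLocalMin.deriv_deriv_nonneg (h : IsLocalMin f x₀) (hc : ContinuousAt f x₀) :
    0 ≤ deriv (deriv f) x₀ := by
  by_contra! hneg
  have hmax := isLocalMax_of_deriv_deriv_neg hneg h.deriv_eq_zero hc
  have hconst : f =ᶠ[𝓝 x₀] fun _ => f x₀ := by
    filter_upwards [h, hmax] with x hmin hmax' using le_antisymm hmax' hmin
  have hderiv : deriv f =ᶠ[𝓝 x₀] fun _ => 0 := by
    filter_upwards [hconst.eventuallyEq_nhds] with x hx
    rw [hx.deriv_eq, deriv_const]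
  rw [hderiv.deriv_eq, deriv_const] at hneg
  exact hneg.false

theorem IsLocalMax.deriv_deriv_nonpos (h : IsLocalMax f x₀) (hc : ContinuousAt f x₀) :
    deriv (deriv f) x₀ ≤ 0 := by
  have hneg : 0 ≤ deriv (deriv (-f)) x₀ := h.neg.deriv_deriv_nonneg hc.neg
  rw [deriv.neg', ← Pi.neg_def, deriv.neg] at hneg
  linarith

end SecondDeriv

theorem dist_le_of_second_order_ODE {F : ℝ → ℝ → ℝ} {K : ℝ≥0} {a b : ℝ}
    (hF : ∀ t ∈ Ico a b, LipschitzWith K (F t)) {α β : ℝ → ℝ}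
    (hα : ContDiff ℝ 2 α) (hα'' : ∀ t, deriv (deriv α) t = F t (α t))
    (hβ : ContDiff ℝ 2 β) (hβ'' : ∀ t, deriv (deriv β) t = F t (β t)) :
    ∀ t ∈ Icc a b, dist (α t, deriv α t) (β t, deriv β t) ≤
      dist (α a, deriv α a) (β a, deriv β a) * exp (max 1 K * (t - a)) := by
  have hv : ∀ t ∈ Ico a b,
      LipschitzOnWith (max 1 (K * 1)) (fun p : ℝ × ℝ => (p.2, F t p.1)) univ := fun t ht =>
    (LipschitzWith.prod_snd.prodMk ((hF t ht).comp LipschitzWith.prod_fst)).lipschitzOnWith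
  have hphase : ∀ γ : ℝ → ℝ, ContDiff ℝ 2 γ → (∀ t, deriv (deriv γ) t = F t (γ t)) →
      ContinuousOn (fun t => (γ t, deriv γ t)) (Icc a b) ∧
      ∀ t ∈ Ico a b, HasDerivWithinAt (fun t => (γ t, deriv γ t))
        (deriv γ t, F t (γ t)) (Ici t) t := by
    intro γ hγ hγ''
    have hγ' : ContDiff ℝ 1 (deriv γ) := hγ.iterate_deriv' 1 1
    refine ⟨(hγ.continuous.prodMk hγ'.continuous).continuousOn, fun t _ => ?_⟩
    rw [← hγ'' t]
    exact ((hγ.differentiable two_ne_zero t).hasDerivAt.prodMk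
      (hγ'.differentiable one_ne_zero t).hasDerivAt).hasDerivWithinAt
  obtain ⟨hαc, hα'⟩ := hphase α hα hα''
  obtain ⟨hβc, hβ'⟩ := hphase β hβ hβ''
  simpa using dist_le_of_trajectories_ODE_of_mem hv hαc hα' (fun _ _ => mem_univ _) hβc hβ'
    (fun _ _ => mem_univ _) le_rfl

theorem lipschitzWith_pendulum_force (g c : ℝ) :
    LipschitzWith (‖g‖₊ + ‖c‖₊) fun x => -g * cos x + c * sin x := by
  simpa using ((lipschitzWith_smul (-g)).comp lipschitzWith_cos).add
    ((lipschitzWith_smul c).comp lipschitzWith_sin)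

namespace IsPendulumSolution

variable {g : ℝ} {u α : ℝ → ℝ}

theorem exists_pos_notMem_Icc (hg : 0 < g) (hα : IsPendulumSolution g u α) {t₀ : ℝ}
    (ht₀ : 0 < t₀) (hout : α t₀ ∉ Ioo 0 π) : ∃ t, 0 < t ∧ α t ∉ Icc 0 π := by
  by_contra! hin
  have hnear : ∀ᶠ t in 𝓝 t₀, α t ∈ Icc 0 π := (eventually_gt_nhds ht₀).mono hin
  have hc : ContinuousAt α t₀ := hα.1.continuous.continuousAt
  have hα'' := hα.2 t₀
  rcases (Icc_sdiff_Ioo_same pi_pos.le ▸ ⟨hin t₀ ht₀, hout⟩ : α t₀ ∈ ({0, π} : Set ℝ)) with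
    h0 | hπ
  · have hmin : IsLocalMin α t₀ := hnear.mono fun t ht => h0 ▸ ht.1
    have := hmin.deriv_deriv_nonneg hc
    rw [hα'', h0, cos_zero, sin_zero] at this
    linarith
  · have hmax : IsLocalMax α t₀ := hnear.mono fun t ht => hπ ▸ ht.2
    have := hmax.deriv_deriv_nonpos hc
    rw [hα'', hπ, cos_pi, sin_pi] at this
    linarith

end IsPendulumSolution

theorem exists_lipschitzWith_pendulum_eval {g : ℝ} {u : ℝ → ℝ} (hu : Continuous u)
    {A : ℝ → ℝ → ℝ} (hA : ∀ φ, IsPendulumSolution g u (A φ) ∧ A φ 0 = φ ∧ deriv (A φ) 0 = 0)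
    {T : ℝ} (hT : 0 ≤ T) : ∃ C, LipschitzWith C fun φ => A φ T := by
  obtain ⟨M, hM⟩ := (isCompact_Icc (a := 0) (b := T)).exists_bound_of_continuousOn hu.continuousOn
  set K := ‖g‖₊ + M.toNNReal
  have hF : ∀ t ∈ Ico 0 T, LipschitzWith K fun x => -g * cos x + u t * sin x := by
    refine fun t ht => (lipschitzWith_pendulum_force g (u t)).weaken ?_
    rw [← NNReal.coe_le_coe, NNReal.coe_add, NNReal.coe_add, coe_nnnorm, coe_nnnorm,
      Real.coe_toNNReal']
    grw [hM t (Ico_subset_Icc_self ht), ← le_max_left M 0]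
  refine ⟨(exp (max 1 K * T)).toNNReal, .of_dist_le_mul fun φ ψ => ?_⟩
  have hphase := dist_le_of_second_order_ODE hF (hA φ).1.1 (hA φ).1.2 (hA ψ).1.1 (hA ψ).1.2 T
    ⟨hT, le_rfl⟩
  have hinit : dist (φ, (0 : ℝ)) (ψ, 0) = dist φ ψ := by simp [Prod.dist_eq]
  rw [(hA φ).2.1, (hA φ).2.2, (hA ψ).2.1, (hA ψ).2.2, hinit, sub_zero] at hphase
  rw [coe_toNNReal _ (exp_pos _).le, mul_comm]
  exact (le_max_left _ _).trans hphase

/-- The set `N` of never-falling initial angles is relatively closed in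
`(0, π)`: its complement within `(0, π)` is open. -/
theorem pendulum_neverfall_set_relatively_closed (g : ℝ) (hg : 0 < g)
    (u : ℝ → ℝ) (hu : Continuous u) (A : ℝ → ℝ → ℝ)
    (hA : ∀ φ : ℝ, IsPendulumSolution g u (A φ) ∧ A φ 0 = φ ∧ deriv (A φ) 0 = 0) :
    IsOpen (Set.Ioo (0 : ℝ) Real.pi \
      {φ : ℝ | φ ∈ Set.Ioo (0 : ℝ) Real.pi ∧
        ∀ t : ℝ, 0 ≤ t → A φ t ∈ Set.Ioo (0 : ℝ) Real.pi}) := by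
  have hfalling : Ioo 0 π \ {φ | φ ∈ Ioo 0 π ∧ ∀ t, 0 ≤ t → A φ t ∈ Ioo 0 π} =
      Ioo 0 π ∩ ⋃ t ∈ Ioi (0 : ℝ), (fun φ => A φ t) ⁻¹' (Icc 0 π)ᶜ := by
    ext φ
    simp only [Set.mem_sdiff, mem_ofPred_eq, mem_inter_iff, mem_iUnion, mem_preimage, mem_compl_iff,
      mem_Ioi, exists_prop, not_and, not_forall]
    refine and_congr_right fun hφ => ⟨fun hout => ?_, fun ⟨t, ht, hout⟩ _ =>
      ⟨t, ht.le, fun hin => hout (Ioo_subset_Icc_self hin)⟩⟩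
    obtain ⟨t₀, ht₀, hout₀⟩ := hout hφ
    have ht₀pos : 0 < t₀ := ht₀.lt_of_ne <| by rintro rfl; exact hout₀ (by rwa [(hA φ).2.1])
    exact (hA φ).1.exists_pos_notMem_Icc hg ht₀pos hout₀
  rw [hfalling]
  refine isOpen_Ioo.inter <| isOpen_biUnion fun t ht => (isClosed_Icc.preimage ?_).isOpen_compl
  obtain ⟨C, hC⟩ := exists_lipschitzWith_pendulum_eval hu hA (le_of_lt ht)
  exact hC.continuous
end
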